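/- arXiv:2603.14689 — 8 statements merged into one kernel-verified Lean document; each statement's English description precedes it below -/
import Mathlib

section
/- If a coordinate set I is stochastically sufficient for a finite stochastic decision problem, then I is statically sufficient for the underlying static decision problem; that is, any two states that agree on I have equal full-information optimal-action sets. -/
/-- Full-information optimizer: actions maximizing pointwise utility at state `s`. -/
def Opt {n : ℕ} {A : Type*} {X : Fin n → Type*}
    (U : A → (∀ i, X i) → ℝ) (s : ∀ i, X i) : Set A :=
  {a | ∀ b, U b s ≤ U a s}

/-- Conditional (unnormalized) expected utility of action `a` over the `I`-fiber of `s`. -/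
noncomputable def condEU {n : ℕ} {A : Type*} {X : Fin n → Type*}
    [∀ i, Fintype (X i)] [∀ i, DecidableEq (X i)]
    (U : A → (∀ i, X i) → ℝ) (P : (∀ i, X i) → ℝ)
    (I : Finset (Fin n)) (s : ∀ i, X i) (a : A) : ℝ :=
  ∑ t ∈ Finset.univ.filter (fun t : ∀ i, X i => ∀ i ∈ I, t i = s i), P t * U a t

/-- Conditional optimizer: actions maximizing conditional expected utility on the `I`-fiber. -/
noncomputable def OptS {n : ℕ} {A : Type*} {X : Fin n → Type*}
    [∀ i, Fintype (X i)] [∀ i, DecidableEq (X i)]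
    (U : A → (∀ i, X i) → ℝ) (P : (∀ i, X i) → ℝ)
    (I : Finset (Fin n)) (s : ∀ i, X i) : Set A :=
  {a | ∀ b, condEU U P I s b ≤ condEU U P I s a}

/-- `I` is statically sufficient: states agreeing on `I` have the same optimizer. -/
def StaticSufficient {n : ℕ} {A : Type*} {X : Fin n → Type*}
    (U : A → (∀ i, X i) → ℝ) (I : Finset (Fin n)) : Prop :=
  ∀ s t : ∀ i, X i, (∀ i ∈ I, s i = t i) → Opt U s = Opt U t

/-- `I` is stochastically sufficient: the conditional optimizer agrees with the
full-information optimizer at every state. -/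
def StochSufficient {n : ℕ} {A : Type*} {X : Fin n → Type*}
    [∀ i, Fintype (X i)] [∀ i, DecidableEq (X i)]
    (U : A → (∀ i, X i) → ℝ) (P : (∀ i, X i) → ℝ) (I : Finset (Fin n)) : Prop :=
  ∀ s : ∀ i, X i, OptS U P I s = Opt U s

/-- `I` is stochastically decisive: every positive-probability state's observed fiber
has a unique conditional optimal action. -/
def StochDecisive {n : ℕ} {A : Type*} {X : Fin n → Type*}
    [∀ i, Fintype (X i)] [∀ i, DecidableEq (X i)]
    (U : A → (∀ i, X i) → ℝ) (P : (∀ i, X i) → ℝ) (I : Finset (Fin n)) : Prop :=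
  ∀ s : ∀ i, X i, 0 < P s → ∃ a : A, OptS U P I s = {a}

section FiberInvariance

variable {n : ℕ} {A : Type*} {X : Fin n → Type*} [∀ i, Fintype (X i)] [∀ i, DecidableEq (X i)]
  (U : A → (∀ i, X i) → ℝ) (P : (∀ i, X i) → ℝ) {I : Finset (Fin n)} {s t : ∀ i, X i}

theorem condEU_eq_of_forall_mem_eq (hst : ∀ i ∈ I, s i = t i) :
    condEU U P I s = condEU U P I t := by
  funext a
  unfold condEU
  congr 1
  exact Finset.filter_congr fun u _ => forall₂_congr fun i hi => by rw [hst i hi]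

theorem OptS_eq_of_forall_mem_eq (hst : ∀ i ∈ I, s i = t i) :
    OptS U P I s = OptS U P I t := by
  unfold OptS
  rw [condEU_eq_of_forall_mem_eq U P hst]

end FiberInvariance

theorem stochastic_sufficient_implies_static_sufficient_general
    {n : ℕ} {A : Type*} {X : Fin n → Type*}
    [∀ i, Fintype (X i)]
    [∀ i, DecidableEq (X i)]
    (U : A → (∀ i, X i) → ℝ) (P : (∀ i, X i) → ℝ)
    (I : Finset (Fin n))
    (hstoch : StochSufficient U P I) :
    StaticSufficient U I := by
  intro s t hst
  rw [← hstoch s, ← hstoch t, OptS_eq_of_forall_mem_eq U P hst]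

theorem stochastic_sufficient_implies_static_sufficient
    {n : ℕ} {A : Type*} {X : Fin n → Type*}
    [Fintype A] [Nonempty A] [∀ i, Fintype (X i)] [∀ i, Nonempty (X i)]
    [∀ i, DecidableEq (X i)]
    (U : A → (∀ i, X i) → ℝ) (P : (∀ i, X i) → ℝ)
    (hP0 : ∀ s, 0 ≤ P s) (hP1 : ∑ s : ∀ i, X i, P s = 1)
    (I : Finset (Fin n))
    (hstoch : StochSufficient U P I) :
    StaticSufficient U I :=
  stochastic_sufficient_implies_static_sufficient_general U P I hstoch
end

section
/- Assume the distribution P has full support (P(s) > 0 for all s ∈ S) and the action set A is nonempty. Then a coordinate set I is statically sufficient if and only if I is stochastically sufficient. -/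
theorem full_support_static_iff_stochastic_sufficient
    {n : ℕ} {A : Type*} {X : Fin n → Type*}
    [Fintype A] [Nonempty A] [∀ i, Fintype (X i)] [∀ i, Nonempty (X i)]
    [∀ i, DecidableEq (X i)]
    (U : A → (∀ i, X i) → ℝ) (P : (∀ i, X i) → ℝ)
    (hP0 : ∀ s, 0 ≤ P s) (hP1 : ∑ s : ∀ i, X i, P s = 1)
    (hfull : ∀ s : ∀ i, X i, 0 < P s)
    (I : Finset (Fin n)) :
    StaticSufficient U I ↔ StochSufficient U P I := by
  constructor
  · intro hstat s
    have hs_mem : s ∈ Finset.univ.filter (fun t : ∀ i, X i => ∀ i ∈ I, t i = s i) := by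
      simp
    obtain ⟨b0, -, hb0⟩ := Finset.exists_max_image (Finset.univ : Finset A)
      (fun a => U a s) Finset.univ_nonempty
    have hb0opt : b0 ∈ Opt U s := fun b => hb0 b (Finset.mem_univ b)
    have hfiber : ∀ t ∈ Finset.univ.filter (fun t : ∀ i, X i => ∀ i ∈ I, t i = s i),
        Opt U s = Opt U t := by
      intro t ht
      exact hstat s t (fun i hi => ((Finset.mem_filter.mp ht).2 i hi).symm)
    have hmax : ∀ a : A, condEU U P I s a ≤ condEU U P I s b0 := by
      intro a
      apply Finset.sum_le_sum
      intro t ht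
      have hb0t : b0 ∈ Opt U t := (hfiber t ht) ▸ hb0opt
      exact mul_le_mul_of_nonneg_left (hb0t a) (hP0 t)
    ext a
    constructor
    · intro ha b
      have h1 : condEU U P I s b0 ≤ condEU U P I s a := ha b0
      have h2 : condEU U P I s a ≤ condEU U P I s b0 := hmax a
      have heq : condEU U P I s a = condEU U P I s b0 := le_antisymm h2 h1
      have hzero : ∑ t ∈ Finset.univ.filter (fun t : ∀ i, X i => ∀ i ∈ I, t i = s i),
          (P t * U b0 t - P t * U a t) = 0 := by
        rw [Finset.sum_sub_distrib]
        unfold condEU at heq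
        linarith [heq]
      have hterm := (Finset.sum_eq_zero_iff_of_nonneg (by
        intro t ht
        have hb0t : b0 ∈ Opt U t := (hfiber t ht) ▸ hb0opt
        have := mul_le_mul_of_nonneg_left (hb0t a) (hP0 t)
        linarith)).mp hzero s hs_mem
      have hUs : U a s = U b0 s := by
        have hps := hfull s
        nlinarith [hterm]
      calc U b s ≤ U b0 s := hb0opt b
        _ = U a s := hUs.symm
    · intro ha b
      apply Finset.sum_le_sum
      intro t ht
      have hat : a ∈ Opt U t := (hfiber t ht) ▸ ha
      exact mul_le_mul_of_nonneg_left (hat b) (hP0 t)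
  · intro hstoch s t hst
    have hfib : (Finset.univ.filter (fun u : ∀ i, X i => ∀ i ∈ I, u i = s i))
        = Finset.univ.filter (fun u : ∀ i, X i => ∀ i ∈ I, u i = t i) := by
      apply Finset.filter_congr
      intro u _
      constructor
      · intro h i hi; rw [h i hi, hst i hi]
      · intro h i hi; rw [h i hi, ← hst i hi]
    have hcond : condEU U P I s = condEU U P I t := by
      funext a
      unfold condEU
      rw [hfib]
    have : OptS U P I s = OptS U P I t := by
      unfold OptS
      rw [hcond]
    rw [← hstoch s, ← hstoch t, this]
end

section
/- Assume the distribution P has full support and the action set A is nonempty. Then for every k ∈ ℕ, there exists a stochastically sufficient coordinate set I with |I| ≤ k if and only if there exists a statically sufficient coordinate set I with |I| ≤ k. -/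
lemma condEU_congr {n : ℕ} {A : Type*} {X : Fin n → Type*}
    [∀ i, Fintype (X i)] [∀ i, DecidableEq (X i)]
    (U : A → (∀ i, X i) → ℝ) (P : (∀ i, X i) → ℝ)
    (I : Finset (Fin n)) {s t : ∀ i, X i} (h : ∀ i ∈ I, s i = t i) :
    condEU U P I s = condEU U P I t := by
  funext a
  unfold condEU
  apply Finset.sum_congr
  · apply Finset.filter_congr
    intro u _
    constructor
    · intro h' i hi; exact (h' i hi).trans (h i hi)
    · intro h' i hi; exact (h' i hi).trans (h i hi).symm
  · intros; rfl

theorem full_support_minimum_preservation_iff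
    {n : ℕ} {A : Type*} {X : Fin n → Type*}
    [Fintype A] [Nonempty A] [∀ i, Fintype (X i)] [∀ i, Nonempty (X i)]
    [∀ i, DecidableEq (X i)]
    (U : A → (∀ i, X i) → ℝ) (P : (∀ i, X i) → ℝ)
    (hP0 : ∀ s, 0 ≤ P s) (hP1 : ∑ s : ∀ i, X i, P s = 1)
    (hfull : ∀ s : ∀ i, X i, 0 < P s) (k : ℕ) :
    (∃ I : Finset (Fin n), I.card ≤ k ∧ StochSufficient U P I) ↔
      (∃ I : Finset (Fin n), I.card ≤ k ∧ StaticSufficient U I) := by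
  constructor
  · rintro ⟨I, hk, hss⟩
    refine ⟨I, hk, fun s t hst => ?_⟩
    rw [← hss s, ← hss t]
    unfold OptS
    rw [condEU_congr U P I hst]
  · rintro ⟨I, hk, hstat⟩
    refine ⟨I, hk, fun s => ?_⟩
    ext a
    simp only [OptS, Opt, Set.mem_setOf_eq]
    have hsfib : s ∈ Finset.univ.filter (fun t : ∀ i, X i => ∀ i ∈ I, t i = s i) := by
      simp
    constructor
    · intro ha
      by_contra hno
      -- pick a maximizer b at s
      obtain ⟨b, hb⟩ := Finset.exists_max_image (Finset.univ : Finset A)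
        (fun c => U c s) ⟨Classical.arbitrary A, Finset.mem_univ _⟩
      have hbOpt : ∀ c, U c s ≤ U b s := fun c => hb.2 c (Finset.mem_univ c)
      push_neg at hno
      obtain ⟨c, hc⟩ := hno
      have hlt : U a s < U b s := lt_of_lt_of_le hc (hbOpt c)
      have hsum : condEU U P I s a < condEU U P I s b := by
        apply Finset.sum_lt_sum
        · intro t ht
          simp only [Finset.mem_filter] at ht
          have : Opt U t = Opt U s := hstat t s ht.2
          have hbOptt : b ∈ Opt U t := by rw [this]; exact hbOpt
          exact mul_le_mul_of_nonneg_left (hbOptt a) (hP0 t)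
        · exact ⟨s, hsfib, mul_lt_mul_of_pos_left hlt (hfull s)⟩
      exact absurd (ha b) (not_le.mpr hsum)
    · intro ha b
      unfold condEU
      apply Finset.sum_le_sum
      intro t ht
      simp only [Finset.mem_filter] at ht
      have : Opt U t = Opt U s := hstat t s ht.2
      have haOptt : a ∈ Opt U t := by rw [this]; exact ha
      exact mul_le_mul_of_nonneg_left (haOptt b) (hP0 t)
end

section
/- If a coordinate set I is stochastically sufficient, then I contains every relevant coordinate of the underlying static decision problem: for every coordinate i such that there exist states s, t with s_j = t_j for all j ≠ i and Opt(s) ≠ Opt(t), one has i ∈ I. -/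
section

variable {n : ℕ} {A : Type*} {X : Fin n → Type*}

def Relevant (U : A → (∀ i, X i) → ℝ) (i : Fin n) : Prop :=
  ∃ s t : ∀ j, X j, (∀ j, j ≠ i → s j = t j) ∧ Opt U s ≠ Opt U t

theorem StaticSufficient.mem_of_relevant {U : A → (∀ i, X i) → ℝ} {I : Finset (Fin n)}
    (hI : StaticSufficient U I) {i : Fin n} (hi : Relevant U i) : i ∈ I := by
  obtain ⟨s, t, hagree, hne⟩ := hi
  by_contra hiI
  exact hne <| hI s t fun j hj => hagree j (ne_of_mem_of_not_mem hj hiI)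

section Conditional

variable [∀ i, Fintype (X i)] [∀ i, DecidableEq (X i)]
  {U : A → (∀ i, X i) → ℝ} {P : (∀ i, X i) → ℝ} {I : Finset (Fin n)}

theorem condEU_eq_of_agree {s t : ∀ i, X i} (hst : ∀ i ∈ I, s i = t i) :
    condEU U P I s = condEU U P I t := by
  funext a
  unfold condEU
  congr 1
  exact Finset.filter_congr fun u _ =>
    forall₂_congr fun i hi => by rw [hst i hi]

theorem OptS_eq_of_agree {s t : ∀ i, X i} (hst : ∀ i ∈ I, s i = t i) :
    OptS U P I s = OptS U P I t := by
  unfold OptS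
  rw [condEU_eq_of_agree hst]

theorem StochSufficient.staticSufficient (h : StochSufficient U P I) : StaticSufficient U I :=
  fun s t hst => by rw [← h s, ← h t, OptS_eq_of_agree hst]

end Conditional

end

theorem stochastic_sufficient_contains_relevant_general
    {n : ℕ} {A : Type*} {X : Fin n → Type*}
    [∀ i, Fintype (X i)]
    [∀ i, DecidableEq (X i)]
    (U : A → (∀ i, X i) → ℝ) (P : (∀ i, X i) → ℝ)
    (I : Finset (Fin n))
    (hstoch : StochSufficient U P I) :
    ∀ i : Fin n,
      (∃ s t : ∀ j, X j, (∀ j : Fin n, j ≠ i → s j = t j) ∧ Opt U s ≠ Opt U t) →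
      i ∈ I :=
  fun _ hi => hstoch.staticSufficient.mem_of_relevant hi

theorem stochastic_sufficient_contains_relevant
    {n : ℕ} {A : Type*} {X : Fin n → Type*}
    [Fintype A] [Nonempty A] [∀ i, Fintype (X i)] [∀ i, Nonempty (X i)]
    [∀ i, DecidableEq (X i)]
    (U : A → (∀ i, X i) → ℝ) (P : (∀ i, X i) → ℝ)
    (hP0 : ∀ s, 0 ≤ P s) (hP1 : ∑ s : ∀ i, X i, P s = 1)
    (I : Finset (Fin n))
    (hstoch : StochSufficient U P I) :
    ∀ i : Fin n,
      (∃ s t : ∀ j, X j, (∀ j : Fin n, j ≠ i → s j = t j) ∧ Opt U s ≠ Opt U t) →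
      i ∈ I :=
  stochastic_sufficient_contains_relevant_general U P I hstoch
end

section
/- If there exists a stochastically sufficient coordinate set I with |I| ≤ k, then the set of relevant coordinates of the underlying static decision problem has cardinality at most k. -/
/-! The conditional optimizer `OptS U P I s` depends on `s` only through the `I`-fiber it sums
over, hence only through the `I`-coordinates of `s`. So, whatever `P` is, a stochastically
sufficient `I` is statically sufficient, and a coordinate outside a statically sufficient set is
not relevant: changing it alone never changes the optimizer. -/

section

variable {n : ℕ} {A : Type*} {X : Fin n → Type*}

def relevantCoords (U : A → (∀ i, X i) → ℝ) : Set (Fin n) :=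
  {i | ∃ s t : ∀ j, X j, (∀ j : Fin n, j ≠ i → s j = t j) ∧ Opt U s ≠ Opt U t}

variable [∀ i, Fintype (X i)] [∀ i, DecidableEq (X i)]

theorem OptS_congr (U : A → (∀ i, X i) → ℝ) (P : (∀ i, X i) → ℝ) (I : Finset (Fin n))
    {s t : ∀ i, X i} (hst : ∀ i ∈ I, s i = t i) : OptS U P I s = OptS U P I t := by
  have hfiber : (Finset.univ.filter fun x : ∀ i, X i => ∀ i ∈ I, x i = s i)
      = Finset.univ.filter fun x : ∀ i, X i => ∀ i ∈ I, x i = t i :=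
    Finset.filter_congr fun x _ => forall₂_congr fun i hi => by rw [hst i hi]
  simp only [OptS, condEU, hfiber]

theorem StochSufficient.staticSufficient_s7 {U : A → (∀ i, X i) → ℝ} {P : (∀ i, X i) → ℝ}
    {I : Finset (Fin n)} (hI : StochSufficient U P I) : StaticSufficient U I := by
  intro s t hst
  rw [← hI s, ← hI t, OptS_congr U P I hst]

end

theorem StaticSufficient.relevantCoords_subset {n : ℕ} {A : Type*} {X : Fin n → Type*}
    {U : A → (∀ i, X i) → ℝ} {I : Finset (Fin n)} (hI : StaticSufficient U I) :
    relevantCoords U ⊆ I := by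
  rintro i ⟨s, t, hst, hne⟩
  by_contra hiI
  exact hne (hI s t fun j hj => hst j fun hji => hiI (hji ▸ hj))

theorem stochastic_minimum_bounds_relevant_set_general
    {n : ℕ} {A : Type*} {X : Fin n → Type*}
    [∀ i, Fintype (X i)]
    [∀ i, DecidableEq (X i)]
    (U : A → (∀ i, X i) → ℝ) (P : (∀ i, X i) → ℝ)
    (k : ℕ)
    (hex : ∃ I : Finset (Fin n), I.card ≤ k ∧ StochSufficient U P I) :
    {i : Fin n | ∃ s t : ∀ j, X j,
        (∀ j : Fin n, j ≠ i → s j = t j) ∧ Opt U s ≠ Opt U t}.ncard ≤ k := by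
  obtain ⟨I, hIk, hI⟩ := hex
  calc (relevantCoords U).ncard
      ≤ (I : Set (Fin n)).ncard :=
        Set.ncard_le_ncard hI.staticSufficient_s7.relevantCoords_subset I.finite_toSet
    _ = I.card := Set.ncard_coe_finset I
    _ ≤ k := hIk

theorem stochastic_minimum_bounds_relevant_set
    {n : ℕ} {A : Type*} {X : Fin n → Type*}
    [Fintype A] [Nonempty A] [∀ i, Fintype (X i)] [∀ i, Nonempty (X i)]
    [∀ i, DecidableEq (X i)]
    (U : A → (∀ i, X i) → ℝ) (P : (∀ i, X i) → ℝ)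
    (hP0 : ∀ s, 0 ≤ P s) (hP1 : ∑ s : ∀ i, X i, P s = 1)
    (k : ℕ)
    (hex : ∃ I : Finset (Fin n), I.card ≤ k ∧ StochSufficient U P I) :
    {i : Fin n | ∃ s t : ∀ j, X j,
        (∀ j : Fin n, j ≠ i → s j = t j) ∧ Opt U s ≠ Opt U t}.ncard ≤ k :=
  stochastic_minimum_bounds_relevant_set_general U P k hex
end

section
/- Suppose the coordinate set I is statically sufficient and every I-fiber contains at least one positive-probability state, i.e., for every state s there exists a state t agreeing with s on I with P(t) > 0. Then I is stochastically sufficient. -/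
lemma Opt_nonempty {n : ℕ} {A : Type*} {X : Fin n → Type*} [Finite A] [Nonempty A]
    (U : A → (∀ i, X i) → ℝ) (s : ∀ i, X i) : (Opt U s).Nonempty :=
  Finite.exists_max (U · s)

section Fiber

variable {n : ℕ} {A : Type*} {X : Fin n → Type*} [∀ i, Fintype (X i)] [∀ i, DecidableEq (X i)]
  {U : A → (∀ i, X i) → ℝ} {P : (∀ i, X i) → ℝ} {I : Finset (Fin n)} {s : ∀ i, X i}

lemma mem_OptS_of_forall_mem_Opt (hP0 : ∀ t, 0 ≤ P t) {a : A}
    (ha : ∀ t : ∀ i, X i, (∀ i ∈ I, t i = s i) → a ∈ Opt U t) : a ∈ OptS U P I s := by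
  intro b
  refine Finset.sum_le_sum fun t ht => ?_
  exact mul_le_mul_of_nonneg_left (ha t (Finset.mem_filter.mp ht).2 b) (hP0 t)

lemma mem_Opt_of_mem_OptS (hP0 : ∀ t, 0 ≤ P t) {a a₀ : A}
    (ha₀ : ∀ t : ∀ i, X i, (∀ i ∈ I, t i = s i) → a₀ ∈ Opt U t) (ha : a ∈ OptS U P I s)
    {t₀ : ∀ i, X i} (ht₀ : ∀ i ∈ I, t₀ i = s i) (hPt₀ : 0 < P t₀) : a ∈ Opt U t₀ := by
  by_contra hnot
  obtain ⟨b, hb⟩ : ∃ b, U a t₀ < U b t₀ := by simpa [Opt] using hnot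
  have hlt : condEU U P I s a < condEU U P I s a₀ := by
    refine Finset.sum_lt_sum (fun t ht => ?_) ⟨t₀, by simpa using ht₀, ?_⟩
    · exact mul_le_mul_of_nonneg_left (ha₀ t (Finset.mem_filter.mp ht).2 a) (hP0 t)
    · exact mul_lt_mul_of_pos_left (hb.trans_le (ha₀ t₀ ht₀ b)) hPt₀
  exact (ha a₀).not_gt hlt

end Fiber

theorem static_sufficient_positive_fibers_implies_stochastic_general
    {n : ℕ} {A : Type*} {X : Fin n → Type*}
    [Fintype A] [Nonempty A] [∀ i, Fintype (X i)]
    [∀ i, DecidableEq (X i)]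
    (U : A → (∀ i, X i) → ℝ) (P : (∀ i, X i) → ℝ)
    (hP0 : ∀ s, 0 ≤ P s)
    (I : Finset (Fin n))
    (hstat : StaticSufficient U I)
    (hpos : ∀ s : ∀ i, X i, ∃ t : ∀ i, X i, (∀ i ∈ I, t i = s i) ∧ 0 < P t) :
    StochSufficient U P I := by
  intro s
  have hfiber : ∀ t : ∀ i, X i, (∀ i ∈ I, t i = s i) → Opt U t = Opt U s :=
    fun t => hstat t s
  obtain ⟨t₀, ht₀, hPt₀⟩ := hpos s
  obtain ⟨a₀, ha₀⟩ := Opt_nonempty U s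
  ext a
  constructor
  · intro ha
    rw [← hfiber t₀ ht₀]
    exact mem_Opt_of_mem_OptS hP0 (fun t ht => hfiber t ht ▸ ha₀) ha ht₀ hPt₀
  · exact fun ha => mem_OptS_of_forall_mem_Opt hP0 fun t ht => hfiber t ht ▸ ha

theorem static_sufficient_positive_fibers_implies_stochastic
    {n : ℕ} {A : Type*} {X : Fin n → Type*}
    [Fintype A] [Nonempty A] [∀ i, Fintype (X i)] [∀ i, Nonempty (X i)]
    [∀ i, DecidableEq (X i)]
    (U : A → (∀ i, X i) → ℝ) (P : (∀ i, X i) → ℝ)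
    (hP0 : ∀ s, 0 ≤ P s) (hP1 : ∑ s : ∀ i, X i, P s = 1)
    (I : Finset (Fin n))
    (hstat : StaticSufficient U I)
    (hpos : ∀ s : ∀ i, X i, ∃ t : ∀ i, X i, (∀ i ∈ I, t i = s i) ∧ 0 < P t) :
    StochSufficient U P I :=
  static_sufficient_positive_fibers_implies_stochastic_general U P hP0 I hstat hpos
end

section
/- Suppose that on every I-fiber the pointwise optimal-action set is a constant singleton: for every state s there is an action a_s such that Opt(t) = {a_s} for every state t agreeing with s on I. Then for every probability mass function P and every state s whose I-fiber contains a positive-probability state, OptS_I(s) = {a_s} = Opt(s); in particular, if every I-fiber contains a positive-probability state then I is stochastically sufficient. -/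
/-!
If one action `a` is the unique pointwise optimum at every state of the `I`-fiber, then
weighting by `P ≥ 0` keeps it conditionally optimal, and a single positive-probability state
in the fiber makes its conditional advantage over every other action strict.
-/

theorem lt_of_Opt_eq_singleton {n : ℕ} {A : Type*} {X : Fin n → Type*}
    {U : A → (∀ i, X i) → ℝ} {t : ∀ i, X i} {a b : A} (ha : Opt U t = {a}) (hb : b ≠ a) :
    U b t < U a t := by
  have hmax : a ∈ Opt U t := ha ▸ Set.mem_singleton a
  refine (hmax b).lt_of_ne fun heq => hb ?_
  have hbmax : b ∈ Opt U t := fun c => heq ▸ hmax c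
  rwa [ha] at hbmax

section ConditionalOptimum

variable {n : ℕ} {A : Type*} {X : Fin n → Type*}
  [∀ i, Fintype (X i)] [∀ i, DecidableEq (X i)]
  {U : A → (∀ i, X i) → ℝ} {P : (∀ i, X i) → ℝ} {I : Finset (Fin n)} {s : ∀ i, X i}

theorem condEU_le_condEU (hP : ∀ t, 0 ≤ P t) {a b : A}
    (hle : ∀ t, (∀ i ∈ I, t i = s i) → U b t ≤ U a t) :
    condEU U P I s b ≤ condEU U P I s a :=
  Finset.sum_le_sum fun t ht =>
    mul_le_mul_of_nonneg_left (hle t (Finset.mem_filter.mp ht).2) (hP t)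

theorem condEU_lt_condEU (hP : ∀ t, 0 ≤ P t) {a b : A}
    (hle : ∀ t, (∀ i ∈ I, t i = s i) → U b t ≤ U a t)
    (hlt : ∃ t, (∀ i ∈ I, t i = s i) ∧ 0 < P t ∧ U b t < U a t) :
    condEU U P I s b < condEU U P I s a := by
  obtain ⟨t, hts, hPt, hUt⟩ := hlt
  exact Finset.sum_lt_sum
    (fun t ht => mul_le_mul_of_nonneg_left (hle t (Finset.mem_filter.mp ht).2) (hP t))
    ⟨t, Finset.mem_filter.mpr ⟨Finset.mem_univ t, hts⟩, mul_lt_mul_of_pos_left hUt hPt⟩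

theorem OptS_eq_singleton_of_forall_Opt_eq_singleton (hP : ∀ t, 0 ≤ P t) {a : A}
    (ha : ∀ t, (∀ i ∈ I, t i = s i) → Opt U t = {a})
    (hpos : ∃ t, (∀ i ∈ I, t i = s i) ∧ 0 < P t) :
    OptS U P I s = {a} := by
  have hle : ∀ b t, (∀ i ∈ I, t i = s i) → U b t ≤ U a t := fun b t ht =>
    (show a ∈ Opt U t from ha t ht ▸ Set.mem_singleton a) b
  ext b
  refine ⟨fun hb => ?_, fun hb => hb ▸ fun c => condEU_le_condEU hP (hle c)⟩
  by_contra hne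
  obtain ⟨t, hts, hPt⟩ := hpos
  exact (hb a).not_gt <| condEU_lt_condEU hP (hle b)
    ⟨t, hts, hPt, lt_of_Opt_eq_singleton (ha t hts) hne⟩

end ConditionalOptimum

theorem singleton_static_optimum_transfers_to_stochastic_general
    {n : ℕ} {A : Type*} {X : Fin n → Type*}
    [∀ i, Fintype (X i)]
    [∀ i, DecidableEq (X i)]
    (U : A → (∀ i, X i) → ℝ)
    (I : Finset (Fin n))
    (hsing : ∀ s : ∀ i, X i, ∃ a : A,
        ∀ t : ∀ i, X i, (∀ i ∈ I, t i = s i) → Opt U t = {a}) :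
    ∀ P : (∀ i, X i) → ℝ, (∀ s, 0 ≤ P s) → (∑ s : ∀ i, X i, P s = 1) →
      ((∀ s : ∀ i, X i, (∃ t : ∀ i, X i, (∀ i ∈ I, t i = s i) ∧ 0 < P t) →
          ∃ a : A, OptS U P I s = {a} ∧ Opt U s = {a} ∧ OptS U P I s = Opt U s) ∧
        ((∀ s : ∀ i, X i, ∃ t : ∀ i, X i, (∀ i ∈ I, t i = s i) ∧ 0 < P t) →
          StochSufficient U P I)) := by
  intro P hP _
  have hfiber : ∀ s : ∀ i, X i, (∃ t : ∀ i, X i, (∀ i ∈ I, t i = s i) ∧ 0 < P t) →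
      ∃ a : A, OptS U P I s = {a} ∧ Opt U s = {a} ∧ OptS U P I s = Opt U s := by
    intro s hpos
    obtain ⟨a, ha⟩ := hsing s
    have hOpt : Opt U s = {a} := ha s fun _ _ => rfl
    have hOptS : OptS U P I s = {a} := OptS_eq_singleton_of_forall_Opt_eq_singleton hP ha hpos
    exact ⟨a, hOptS, hOpt, hOptS.trans hOpt.symm⟩
  exact ⟨hfiber, fun hpos s => (hfiber s (hpos s)).choose_spec.2.2⟩

theorem singleton_static_optimum_transfers_to_stochastic
    {n : ℕ} {A : Type*} {X : Fin n → Type*}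
    [Fintype A] [Nonempty A] [∀ i, Fintype (X i)] [∀ i, Nonempty (X i)]
    [∀ i, DecidableEq (X i)]
    (U : A → (∀ i, X i) → ℝ)
    (I : Finset (Fin n))
    (hsing : ∀ s : ∀ i, X i, ∃ a : A,
        ∀ t : ∀ i, X i, (∀ i ∈ I, t i = s i) → Opt U t = {a}) :
    ∀ P : (∀ i, X i) → ℝ, (∀ s, 0 ≤ P s) → (∑ s : ∀ i, X i, P s = 1) →
      ((∀ s : ∀ i, X i, (∃ t : ∀ i, X i, (∀ i ∈ I, t i = s i) ∧ 0 < P t) →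
          ∃ a : A, OptS U P I s = {a} ∧ Opt U s = {a} ∧ OptS U P I s = Opt U s) ∧
        ((∀ s : ∀ i, X i, ∃ t : ∀ i, X i, (∀ i ∈ I, t i = s i) ∧ 0 < P t) →
          StochSufficient U P I)) :=
  singleton_static_optimum_transfers_to_stochastic_general U I hsing
end

section
/- There exists a finite stochastic decision problem and a coordinate set I such that I is stochastically decisive but I is not stochastically sufficient. (For instance: two states with equal probability 1/2, two actions a, b with utilities U(a,s₁)=2, U(b,s₁)=1, U(a,s₂)=0, U(b,s₂)=3, and I = ∅: the unique prior-optimal action is b, so I is decisive, but Opt(s₁) = {a} ≠ OptS_∅(s₁).) -/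
/-- Total probability mass. -/
noncomputable def totalMass {n : ℕ} {X : Fin n → Type*}
    [∀ i, Fintype (X i)] (P : (∀ i, X i) → ℝ) : ℝ :=
  ∑ s : ∀ i, X i, P s

section EmptyObservation

variable {n : ℕ} {A : Type*} {X : Fin n → Type*} [∀ i, Fintype (X i)] [∀ i, DecidableEq (X i)]
  (U : A → (∀ i, X i) → ℝ) (P : (∀ i, X i) → ℝ)

theorem condEU_empty (s : ∀ i, X i) (a : A) :
    condEU U P ∅ s a = ∑ t, P t * U a t := by
  simp [condEU]

theorem optS_empty_eq_singleton {a : A} (ha : ∀ b ≠ a, ∑ t, P t * U b t < ∑ t, P t * U a t)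
    (s : ∀ i, X i) : OptS U P ∅ s = {a} := by
  ext b
  simp only [OptS, condEU_empty, Set.mem_ofPred_eq, Set.mem_singleton_iff]
  constructor
  · intro hb
    by_contra hne
    exact (hb a).not_gt (ha b hne)
  · rintro rfl c
    rcases eq_or_ne c b with rfl | hc
    · exact le_rfl
    · exact (ha c hc).le

theorem stochDecisive_empty_of_forall_lt {a : A}
    (ha : ∀ b ≠ a, ∑ t, P t * U b t < ∑ t, P t * U a t) : StochDecisive U P ∅ :=
  fun s _ => ⟨a, optS_empty_eq_singleton U P ha s⟩

theorem not_stochSufficient_empty_of_forall_lt {a : A}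
    (ha : ∀ b ≠ a, ∑ t, P t * U b t < ∑ t, P t * U a t) {s : ∀ i, X i} (hs : a ∉ Opt U s) :
    ¬ StochSufficient U P ∅ := by
  intro h
  apply hs
  rw [← h s, optS_empty_eq_singleton U P ha s]
  rfl

end EmptyObservation

theorem Fintype.sum_fin_one_bool {M : Type*} [AddCommMonoid M] (f : (Fin 1 → Bool) → M) :
    ∑ t, f t = f (fun _ => true) + f (fun _ => false) := by
  rw [← (Equiv.funUnique (Fin 1) Bool).symm.sum_comp, Fintype.sum_bool]
  rfl

namespace TwoStateExample

/-- Action `true` is `a` and `false` is `b`; the state `fun _ => true` is `s₁`. -/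
def utility (a : Bool) (t : Fin 1 → Bool) : ℝ :=
  if t 0 then (if a then 2 else 1) else (if a then 0 else 3)

noncomputable def prob (_ : Fin 1 → Bool) : ℝ := 1 / 2

theorem expectedUtility_lt : ∀ b ≠ false,
    ∑ t, prob t * utility b t < ∑ t, prob t * utility false t := by
  simp [Fintype.sum_fin_one_bool, prob, utility]
  norm_num

theorem false_not_mem_opt : false ∉ Opt utility (fun _ => true) := by
  intro h
  have := h true
  norm_num [utility] at this

end TwoStateExample

open TwoStateExample in
theorem decisiveness_does_not_imply_preservation :
    ∃ (n : ℕ) (A : Type) (_fA : Fintype A) (_nA : Nonempty A)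
      (X : Fin n → Type) (fX : ∀ i, Fintype (X i)) (_nX : ∀ i, Nonempty (X i))
      (dX : ∀ i, DecidableEq (X i))
      (U : A → (∀ i, X i) → ℝ) (P : (∀ i, X i) → ℝ) (I : Finset (Fin n)),
      (∀ s, 0 ≤ P s) ∧ @totalMass n X fX P = 1 ∧
        @StochDecisive n A X fX dX U P I ∧ ¬ @StochSufficient n A X fX dX U P I := by
  refine ⟨1, Bool, inferInstance, inferInstance, fun _ => Bool, fun _ => inferInstance,
    fun _ => inferInstance, fun _ => inferInstance, utility, prob, ∅, fun _ => by norm_num [prob],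
    ?_, stochDecisive_empty_of_forall_lt _ _ expectedUtility_lt,
    not_stochSufficient_empty_of_forall_lt _ _ expectedUtility_lt false_not_mem_opt⟩
  rw [totalMass, Fintype.sum_fin_one_bool]
  norm_num [prob]
end
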